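/- arXiv:1210.8437 — 5 statements merged into one kernel-verified Lean document; each statement's English description precedes it below -/
import Mathlib

section
/- The coefficient of x^(n(n+1)/4) in the polynomial expansion of (1+x)(1+x^2)···(1+x^n) equals (2^(n-1)/π) ∫₀^{2π} cos(t)cos(2t)···cos(nt) dt, for positive integers n with n ≡ 0 or 3 (mod 4). -/
/-!
Writing `w = e^{2it}`, each factor satisfies `2 cos(kt) e^{ikt} = 1 + w^k`, so
`2^n e^{iSt} ∏ cos(kt) = P(w)` with `P = ∏ (1 + X^k)` and `S = n(n+1)/2`. When `S = 2N` this says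
`∏ cos(kt) = 2^{-n} P(w) w^{-N}`, and integrating over a period kills every monomial except `w^N`,
leaving `2π` times the coefficient of `X^N`.
-/

open Real Finset Complex Polynomial

lemma integral_cexp_int_mul_I (m : ℤ) :
    ∫ t in (0:ℝ)..2 * π, cexp (m * t * I) = if m = 0 then ↑(2 * π) else 0 := by
  split_ifs with hm
  · simp [hm]
  · have hc : (m : ℂ) * I ≠ 0 := by simp [hm]
    simp_rw [mul_right_comm _ _ I]
    rw [integral_exp_mul_complex hc]
    have : (m : ℂ) * I * ↑(2 * π) = m * (2 * π * I) := by push_cast; ring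
    rw [this, exp_int_mul_two_pi_mul_I]
    simp

lemma integral_eval_cexp_div_pow (p : ℂ[X]) {ℓ : ℤ} (hℓ : ℓ ≠ 0) (m : ℕ) :
    ∫ t in (0:ℝ)..2 * π, p.eval (cexp (ℓ * t * I)) / cexp (ℓ * t * I) ^ m
      = 2 * π * p.coeff m := by
  have hdeg : p.natDegree < p.natDegree + m + 1 := by omega
  have hm : m ∈ range (p.natDegree + m + 1) := mem_range.2 (by omega)
  have hterm (j : ℕ) (t : ℝ) : p.coeff j * cexp (ℓ * t * I) ^ j / cexp (ℓ * t * I) ^ m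
      = p.coeff j * cexp (((j - m : ℤ) * ℓ : ℤ) * t * I) := by
    rw [mul_div_assoc, ← Complex.exp_nat_mul, ← Complex.exp_nat_mul, ← Complex.exp_sub]
    congr 2
    push_cast
    ring
  simp_rw [eval_eq_sum_range' hdeg, sum_div, hterm]
  rw [intervalIntegral.integral_finsetSum fun j _ =>
    (by fun_prop : Continuous _).intervalIntegrable _ _]
  simp_rw [intervalIntegral.integral_const_mul, integral_cexp_int_mul_I, mul_eq_zero, hℓ,
    or_false, sub_eq_zero, Nat.cast_inj, mul_ite, mul_zero]
  rw [sum_ite_eq' _ _ _, if_pos hm]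
  push_cast
  ring

lemma two_mul_cos_mul_cexp (z : ℂ) :
    2 * Complex.cos z * cexp (z * I) = 1 + cexp (2 * z * I) := by
  rw [Complex.cos, mul_div_cancel₀ _ two_ne_zero, add_mul, ← Complex.exp_add, ← Complex.exp_add]
  ring_nf
  simp [add_comm]

lemma two_pow_mul_cexp_mul_prod_cos (s : Finset ℕ) (t : ℝ) :
    2 ^ #s * cexp ((∑ k ∈ s, k : ℕ) * t * I) * ∏ k ∈ s, Complex.cos (k * t)
      = ∏ k ∈ s, (1 + cexp (2 * t * I) ^ k) := by
  have (k : ℕ) : 1 + cexp (2 * t * I) ^ k = 2 * Complex.cos (k * t) * cexp (k * t * I) := by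
    rw [two_mul_cos_mul_cexp, ← Complex.exp_nat_mul]
    ring_nf
  simp_rw [this, prod_mul_distrib, prod_const, ← Complex.exp_sum, ← sum_mul]
  push_cast
  ring

lemma sum_Icc_id_mul_two (n : ℕ) : (∑ k ∈ Icc 1 n, k) * 2 = n * (n + 1) := by
  induction n with
  | zero => simp
  | succ n ih => rw [sum_Icc_succ_top (by omega), add_mul, ih]; ring

lemma integral_prod_cos_nat_mul (s : Finset ℕ) {N : ℕ} (hs : ∑ k ∈ s, k = 2 * N) :
    ∫ t in (0:ℝ)..2 * π, ∏ k ∈ s, Real.cos (k * t)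
      = 2 * π * (∏ k ∈ s, (1 + X ^ k : ℤ[X])).coeff N / 2 ^ #s := by
  set Q : ℂ[X] := ∏ k ∈ s, (1 + X ^ k)
  have hQ : Q = (∏ k ∈ s, (1 + X ^ k : ℤ[X])).map (Int.castRingHom ℂ) := by
    simp [Q, Polynomial.map_prod]
  have hprod (t : ℝ) : ∏ k ∈ s, Complex.cos (k * t)
      = Q.eval (cexp (2 * t * I)) / cexp (2 * t * I) ^ N / 2 ^ #s := by
    have hexp : cexp ((∑ k ∈ s, k : ℕ) * t * I) = cexp (2 * t * I) ^ N := by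
      rw [hs, ← Complex.exp_nat_mul]
      push_cast
      ring_nf
    have := two_pow_mul_cexp_mul_prod_cos s t
    rw [hexp] at this
    rw [div_div, eq_div_iff (by simp)]
    simp only [Q, eval_prod, eval_add, eval_one, eval_pow, eval_X, ← this]
    ring
  have hcomplex :
      ∫ t in (0:ℝ)..2 * π, ∏ k ∈ s, Complex.cos (k * t) = 2 * π * Q.coeff N / 2 ^ #s := by
    have := integral_eval_cexp_div_pow Q (ℓ := 2) two_ne_zero N
    push_cast at this
    simp_rw [hprod, intervalIntegral.integral_div, this]
  have hreal : ((∫ t in (0:ℝ)..2 * π, ∏ k ∈ s, Real.cos (k * t) : ℝ) : ℂ)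
      = ∫ t in (0:ℝ)..2 * π, ∏ k ∈ s, Complex.cos (k * t) := by
    rw [← intervalIntegral.integral_ofReal]
    push_cast
    rfl
  rw [← hreal, hQ, coeff_map, eq_intCast] at hcomplex
  exact_mod_cast hcomplex

theorem stmt_0 (n : ℕ) (hn : 0 < n) (h : n % 4 = 0 ∨ n % 4 = 3) :
    ((∏ k ∈ Finset.Icc 1 n, ((1 : Polynomial ℤ) + Polynomial.X ^ k)).coeff (n * (n + 1) / 4) : ℝ)
      = 2 ^ (n - 1) / π * ∫ t in (0:ℝ)..(2 * π), ∏ k ∈ Finset.Icc 1 n, Real.cos (k * t) := by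
  have h4 : 4 ∣ n * (n + 1) := by
    rcases h with h | h <;> simp [Nat.dvd_iff_mod_eq_zero, Nat.mul_mod, Nat.add_mod, h]
  have hsum : ∑ k ∈ Icc 1 n, k = 2 * (n * (n + 1) / 4) := by
    have := sum_Icc_id_mul_two n
    generalize n * (n + 1) = M at *
    omega
  have hpow : (2 : ℝ) ^ n = 2 ^ (n - 1) * 2 := by rw [← pow_succ, Nat.sub_add_cancel hn]
  rw [integral_prod_cos_nat_mul _ hsum, Nat.card_Icc, Nat.add_sub_cancel, hpow]
  field_simp
end

section
/- For any positive integer n and real t with sin(t) ≠ 0, the product f_n(t) = ∏_{k=1}^n cos(kt) satisfies |f_n(t)| ≤ (1/2 + 1/(2n·|sin(t)|))^(n/2). -/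
/-!
Squaring, `f_n(t)² = ∏ cos²(kt)` is at most the `n`-th power of the mean of the `cos²(kt)` by
AM-GM. Since `cos² x = (1 + cos 2x) / 2` and `sin t · ∑ cos(2kt) = cos((n+1)t) sin(nt)` (the sum
telescopes after multiplying by `sin t`), that mean is at most `1/2 + 1/(2n|sin t|)`.
-/

open Real Finset

theorem Real.prod_le_arith_mean_pow {ι : Type*} (s : Finset ι) (z : ι → ℝ)
    (hz : ∀ i ∈ s, 0 ≤ z i) : ∏ i ∈ s, z i ≤ ((∑ i ∈ s, z i) / #s) ^ #s := by
  rcases s.eq_empty_or_nonempty with rfl | hs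
  · simp
  have hcard : (0 : ℝ) < #s := by exact_mod_cast hs.card_pos
  have hamgm := geom_mean_le_arith_mean_weighted s (fun _ ↦ (#s : ℝ)⁻¹) z
    (fun _ _ ↦ by positivity) (by simp [hcard.ne']) hz
  rw [finsetProd_rpow s z hz, ← mul_sum, inv_mul_eq_div] at hamgm
  have hprod := prod_nonneg hz
  calc ∏ i ∈ s, z i = ((∏ i ∈ s, z i) ^ (#s : ℝ)⁻¹) ^ #s :=
        (rpow_inv_natCast_pow hprod hs.card_pos.ne').symm
    _ ≤ ((∑ i ∈ s, z i) / #s) ^ #s := by gcongr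

theorem Real.sin_mul_sum_cos_two_mul (n : ℕ) (t : ℝ) :
    sin t * ∑ k ∈ Icc 1 n, cos (2 * k * t) = cos ((n + 1) * t) * sin (n * t) := by
  induction n with
  | zero => simp
  | succ n ih =>
    rw [sum_Icc_succ_top (by omega), mul_add, ih]
    set a := (n + 1 : ℝ) * t
    push_cast
    rw [show (n + 1 + 1 : ℝ) * t = a + t by ring, show (n : ℝ) * t = a - t by ring,
      show 2 * (n + 1 : ℝ) * t = 2 * a by ring, cos_two_mul, cos_add, sin_sub]
    linear_combination sin t * sin_sq_add_cos_sq a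

theorem Real.sum_cos_sq (n : ℕ) {t : ℝ} (ht : sin t ≠ 0) :
    ∑ k ∈ Icc 1 n, cos (k * t) ^ 2 = n / 2 + cos ((n + 1) * t) * sin (n * t) / (2 * sin t) := by
  have hcos (k : ℕ) : cos (k * t) ^ 2 = 1 / 2 + cos (2 * k * t) / 2 := by rw [cos_sq, mul_assoc]
  rw [← sin_mul_sum_cos_two_mul]
  simp only [hcos, sum_add_distrib, ← sum_div, sum_const, Nat.card_Icc, nsmul_eq_mul]
  rw [mul_comm 2 (sin t), mul_div_mul_left _ _ ht]
  simp

theorem Real.sum_cos_sq_le (n : ℕ) {t : ℝ} (ht : sin t ≠ 0) :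
    ∑ k ∈ Icc 1 n, cos (k * t) ^ 2 ≤ n / 2 + 1 / (2 * |sin t|) := by
  rw [sum_cos_sq n ht]
  have hprod : |cos ((n + 1) * t) * sin (n * t)| ≤ 1 := by
    rw [abs_mul]; exact mul_le_one₀ (abs_cos_le_one _) (abs_nonneg _) (abs_sin_le_one _)
  gcongr _ + ?_
  calc _ ≤ |cos ((n + 1) * t) * sin (n * t) / (2 * sin t)| := le_abs_self _
    _ ≤ 1 / (2 * |sin t|) := by
      rw [abs_div, abs_mul 2, abs_two]
      gcongr

theorem abs_le_rpow_half_of_sq_le_pow {x B : ℝ} (hB : 0 ≤ B) {m : ℕ} (h : x ^ 2 ≤ B ^ m) :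
    |x| ≤ B ^ ((m : ℝ) / 2) :=
  calc |x| = √(x ^ 2) := (sqrt_sq_eq_abs x).symm
    _ ≤ √(B ^ m) := sqrt_le_sqrt h
    _ = B ^ ((m : ℝ) / 2) := by rw [sqrt_eq_rpow, ← rpow_natCast, ← rpow_mul hB, mul_one_div]

theorem stmt_2 (n : ℕ) (hn : 0 < n) (t : ℝ) (ht : Real.sin t ≠ 0) :
    |∏ k ∈ Finset.Icc 1 n, Real.cos (k * t)|
      ≤ (1 / 2 + 1 / (2 * n * |Real.sin t|)) ^ ((n : ℝ) / 2) := by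
  have hn' : (0 : ℝ) < n := by exact_mod_cast hn
  apply abs_le_rpow_half_of_sq_le_pow (by positivity)
  have hmean : (∑ k ∈ Icc 1 n, cos (k * t) ^ 2) / n ≤ 1 / 2 + 1 / (2 * n * |sin t|) := by
    rw [div_le_iff₀ hn']
    refine (sum_cos_sq_le n ht).trans_eq ?_
    field_simp
  calc (∏ k ∈ Icc 1 n, cos (k * t)) ^ 2 = ∏ k ∈ Icc 1 n, cos (k * t) ^ 2 := (prod_pow ..).symm
    _ ≤ ((∑ k ∈ Icc 1 n, cos (k * t) ^ 2) / n) ^ n := by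
      simpa using prod_le_arith_mean_pow (Icc 1 n) (fun k : ℕ ↦ cos (k * t) ^ 2)
        fun _ _ ↦ sq_nonneg _
    _ ≤ _ := by gcongr
end

section
/- Fix 0 < ε < 1/4 and let c = 1/6. Then for all sufficiently large n, with t = n^{-(3/2 - ε)}, the product ∏_{k=1}^n cos(kt) ≤ exp(-(c/2)·n^{2ε}). -/
open Real Finset

/-!
For `|x| ≤ 1` the Taylor bound `cos x ≤ 1 - x²/2 + 5x⁴/96` and `1 + y ≤ exp y` give
`cos x ≤ exp (-x²/2 + 5x⁴/96)`. With `t = n^(-(3/2 - ε))` every `kt` with `k ≤ n` lies in `[0, 1]`,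
so the product is at most `exp (-(t²/2) ∑ k² + (5/96) t⁴ ∑ k⁴)`. Since `∑ k² ≥ n³/3`,
`∑ k⁴ ≤ n⁵`, `t²n³ = n^(2ε)` and `t⁴n⁵ = n^(4ε-1) ≤ 1`, the exponent is at most
`-n^(2ε)/6 + 5/96 ≤ -n^(2ε)/12` as soon as `n ≥ 1`.
-/

theorem Real.cos_le_exp_of_abs_le_one {x : ℝ} (hx : |x| ≤ 1) :
    cos x ≤ exp (-(x ^ 2 / 2) + 5 / 96 * x ^ 4) := by
  have h := (abs_sub_le_iff.1 (cos_bound hx)).1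
  rw [Even.pow_abs ⟨2, rfl⟩] at h
  linarith [add_one_le_exp (-(x ^ 2 / 2) + 5 / 96 * x ^ 4)]

theorem Real.prod_cos_le_exp_sum {ι : Type*} {s : Finset ι} {x : ι → ℝ}
    (hx : ∀ i ∈ s, |x i| ≤ 1) :
    ∏ i ∈ s, cos (x i) ≤ exp (∑ i ∈ s, (-(x i ^ 2 / 2) + 5 / 96 * x i ^ 4)) := by
  rw [exp_sum]
  refine prod_le_prod (fun i hi => cos_nonneg_of_mem_Icc ?_)
    (fun i hi => cos_le_exp_of_abs_le_one (hx i hi))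
  have := abs_le.1 (hx i hi)
  constructor <;> linarith [pi_gt_three]

theorem cube_div_three_le_sum_Icc_sq (n : ℕ) :
    (n : ℝ) ^ 3 / 3 ≤ ∑ k ∈ Icc 1 n, (k : ℝ) ^ 2 := by
  induction n with
  | zero => simp
  | succ n ih =>
    rw [sum_Icc_succ_top (by omega)]
    push_cast
    nlinarith [Nat.cast_nonneg (α := ℝ) n]

theorem sum_Icc_pow_le (n m : ℕ) : ∑ k ∈ Icc 1 n, (k : ℝ) ^ m ≤ (n : ℝ) ^ (m + 1) := by
  calc ∑ k ∈ Icc 1 n, (k : ℝ) ^ m ≤ #(Icc 1 n) • (n : ℝ) ^ m :=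
        sum_le_card_nsmul _ _ _ fun k hk => by
          gcongr
          exact_mod_cast (mem_Icc.1 hk).2
    _ = (n : ℝ) ^ (m + 1) := by simp [pow_succ']

theorem prod_cos_mul_le_exp {n : ℕ} {t : ℝ} (h : |t| * n ≤ 1) :
    ∏ k ∈ Icc 1 n, cos (k * t) ≤ exp (-(t ^ 2 * n ^ 3 / 6) + 5 / 96 * (t ^ 4 * n ^ 5)) := by
  have hkt : ∀ k ∈ Icc 1 n, |(k : ℝ) * t| ≤ 1 := fun k hk => by
    rw [abs_mul, Nat.abs_cast, mul_comm]
    exact le_trans (by gcongr; exact_mod_cast (mem_Icc.1 hk).2) h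
  refine (prod_cos_le_exp_sum hkt).trans (exp_le_exp.2 ?_)
  have h2 := cube_div_three_le_sum_Icc_sq n
  have h4 : ∑ k ∈ Icc 1 n, (k : ℝ) ^ 4 ≤ (n : ℝ) ^ 5 := sum_Icc_pow_le n 4
  have hsum : ∑ k ∈ Icc 1 n, (-(((k : ℝ) * t) ^ 2 / 2) + 5 / 96 * ((k : ℝ) * t) ^ 4)
      = -(t ^ 2 / 2) * ∑ k ∈ Icc 1 n, (k : ℝ) ^ 2 + 5 / 96 * t ^ 4 * ∑ k ∈ Icc 1 n, (k : ℝ) ^ 4 := by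
    rw [mul_sum, mul_sum, ← sum_add_distrib]
    exact sum_congr rfl fun k _ => by ring
  rw [hsum]
  have hquad := mul_le_mul_of_nonneg_left h2 (sq_nonneg t)
  have hquart := mul_le_mul_of_nonneg_left h4 (by positivity : (0 : ℝ) ≤ t ^ 4)
  linarith

theorem rpow_pow_mul_pow {x : ℝ} (hx : 0 < x) (a : ℝ) (k m : ℕ) :
    (x ^ a) ^ k * x ^ m = x ^ (a * k + m) := by
  rw [← rpow_natCast, ← rpow_natCast, ← rpow_mul hx.le, rpow_add hx]

theorem stmt_9 (ε : ℝ) (hε0 : 0 < ε) (hε1 : ε < 1 / 4) :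
    ∃ N : ℕ, ∀ n : ℕ, N ≤ n →
      ∏ k ∈ Finset.Icc 1 n, Real.cos (k * (n : ℝ) ^ (-(3 / 2 - ε)))
        ≤ Real.exp (-(1 / 6 / 2) * (n : ℝ) ^ (2 * ε)) := by
  refine ⟨1, fun n hn => ?_⟩
  have hn1 : (1 : ℝ) ≤ n := by exact_mod_cast hn
  have hn0 : (0 : ℝ) < n := by linarith
  have hnt : |(n : ℝ) ^ (-(3 / 2 - ε))| * n ≤ 1 := by
    rw [abs_of_pos (rpow_pos_of_pos hn0 _), ← rpow_add_one hn0.ne']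
    exact rpow_le_one_of_one_le_of_nonpos hn1 (by linarith)
  have hquad : ((n : ℝ) ^ (-(3 / 2 - ε))) ^ 2 * n ^ 3 = n ^ (2 * ε) := by
    rw [rpow_pow_mul_pow hn0]
    congr 1
    push_cast
    ring
  have hquart : ((n : ℝ) ^ (-(3 / 2 - ε))) ^ 4 * n ^ 5 ≤ 1 := by
    rw [rpow_pow_mul_pow hn0]
    exact rpow_le_one_of_one_le_of_nonpos hn1 (by push_cast; linarith)
  have hgrow : 1 ≤ (n : ℝ) ^ (2 * ε) := one_le_rpow hn1 (by linarith)
  refine (prod_cos_mul_le_exp hnt).trans (exp_le_exp.2 ?_)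
  rw [hquad]
  linarith
end

section
/- Fix 0 < ε < 1/4. Then n^{3/2} · ∫_{n^{-(3/2-ε)} ≤ |t| ≤ π/2} |∏_{k=1}^n cos(kt)| dt → 0 as n → ∞. -/
/-!
Termwise, `|cos x| ≤ exp (-sin² x / 2)`, so `|f_n t| ≤ exp (-S_n t / 2)` with
`S_n t = ∑_{k ≤ n} sin² (k t)`. For `π / n ≤ t ≤ π / 2` the Dirichlet-kernel identity
`∑_{k ≤ n} cos (2 k t) = (sin ((2n+1) t) - sin t) / (2 sin t)` gives `S_n t ≥ n / 4`;
for `t ≤ π / n` Jordan's inequality on the terms with `k ≤ n / 2` gives `S_n t ≫ t² n³`, which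
is at least `n^{2ε}` once `t ≥ n^{-(3/2-ε)}`. Hence `|f_n| ≤ exp (-c n^{2ε}) + exp (-n / 8)` on the
whole range of integration, and this beats the factor `n^{3/2}`.
-/

open Real Finset Filter MeasureTheory

lemma abs_cos_le_exp_neg_sin_sq (x : ℝ) : |cos x| ≤ exp (-(sin x ^ 2) / 2) := by
  have hsq : |cos x| ^ 2 ≤ exp (-(sin x ^ 2) / 2) ^ 2 := by
    rw [sq_abs, ← exp_nat_mul, Nat.cast_ofNat, mul_div_cancel₀ _ two_ne_zero]
    nlinarith [add_one_le_exp (-(sin x ^ 2)), sin_sq_add_cos_sq x]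
  exact (pow_le_pow_iff_left₀ (abs_nonneg _) (exp_pos _).le two_ne_zero).mp hsq

lemma abs_prod_cos_le_exp_neg_sum_sin_sq (n : ℕ) (t : ℝ) :
    |∏ k ∈ Icc 1 n, cos (k * t)| ≤ exp (-(∑ k ∈ Icc 1 n, sin (k * t) ^ 2) / 2) :=
  calc |∏ k ∈ Icc 1 n, cos (k * t)| = ∏ k ∈ Icc 1 n, |cos (k * t)| := abs_prod _ _
    _ ≤ ∏ k ∈ Icc 1 n, exp (-(sin (k * t) ^ 2) / 2) :=
      prod_le_prod (fun _ _ ↦ abs_nonneg _) fun _ _ ↦ abs_cos_le_exp_neg_sin_sq _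
    _ = exp (-(∑ k ∈ Icc 1 n, sin (k * t) ^ 2) / 2) := by
      rw [← exp_sum, ← sum_div, ← sum_neg_distrib]

lemma two_mul_sin_mul_sum_cos_two_mul (n : ℕ) (s : ℝ) :
    2 * sin s * ∑ k ∈ Icc 1 n, cos (2 * k * s) = sin ((2 * n + 1) * s) - sin s := by
  induction n with
  | zero => simp
  | succ n ih =>
    rw [sum_Icc_succ_top (by omega), mul_add, ih]
    have e₁ : (2 * ((n : ℝ) + 1) + 1) * s = 2 * ((n : ℝ) + 1) * s + s := by ring
    have e₂ : (2 * (n : ℝ) + 1) * s = 2 * ((n : ℝ) + 1) * s - s := by ring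
    push_cast
    rw [e₁, e₂, sin_add, sin_sub]
    ring

lemma abs_sum_cos_two_mul_le (n : ℕ) {s : ℝ} (hs : 0 < sin s) :
    |∑ k ∈ Icc 1 n, cos (2 * k * s)| ≤ 1 / sin s := by
  have h : |2 * sin s * ∑ k ∈ Icc 1 n, cos (2 * k * s)| ≤ 2 := by
    rw [two_mul_sin_mul_sum_cos_two_mul]
    linarith [abs_sub (sin ((2 * n + 1) * s)) (sin s), abs_sin_le_one ((2 * n + 1) * s),
      abs_sin_le_one s]
  rw [abs_mul, abs_of_pos (by positivity : (0 : ℝ) < 2 * sin s)] at h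
  rw [le_div_iff₀ hs]
  linarith

lemma sum_sin_sq_eq (n : ℕ) (s : ℝ) :
    ∑ k ∈ Icc 1 n, sin (k * s) ^ 2 = n / 2 - (∑ k ∈ Icc 1 n, cos (2 * k * s)) / 2 := by
  simp_rw [sin_sq_eq_half_sub, ← mul_assoc]
  rw [sum_sub_distrib, sum_const, Nat.card_Icc, Nat.add_sub_cancel, sum_div, nsmul_eq_mul]
  ring

lemma cube_div_three_le_sum_sq (m : ℕ) : (m : ℝ) ^ 3 / 3 ≤ ∑ k ∈ Icc 1 m, (k : ℝ) ^ 2 := by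
  induction m with
  | zero => simp
  | succ m ih =>
    rw [sum_Icc_succ_top (by omega)]
    push_cast
    nlinarith [(Nat.cast_nonneg m : (0 : ℝ) ≤ m)]

lemma sum_sin_sq_ge_of_le_pi_div {n : ℕ} {s : ℝ} (hn : 3 ≤ n) (hs : 0 ≤ s) (hsn : s ≤ π / n) :
    4 / (81 * π ^ 2) * s ^ 2 * n ^ 3 ≤ ∑ k ∈ Icc 1 n, sin (k * s) ^ 2 := by
  set m := n / 2
  have hn₀ : (0 : ℝ) < n := by positivity
  have hm_le : (m : ℝ) ≤ n / 2 := Nat.cast_div_le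
  have hm_ge : (n : ℝ) / 3 ≤ m := by
    have : (n : ℝ) ≤ 2 * m + 1 := by exact_mod_cast (by omega : n ≤ 2 * m + 1)
    have : (3 : ℝ) ≤ n := by exact_mod_cast hn
    linarith
  have jordan : ∀ k ∈ Icc 1 m, (2 / π * (k * s)) ^ 2 ≤ sin (k * s) ^ 2 := by
    intro k hk
    have hkm : (k : ℝ) ≤ m := by exact_mod_cast (mem_Icc.mp hk).2
    have hks : (k : ℝ) * s ≤ π / 2 :=
      calc (k : ℝ) * s ≤ n / 2 * (π / n) := by gcongr; linarith
        _ = π / 2 := by field_simp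
    exact pow_le_pow_left₀ (by positivity) (mul_le_sin (by positivity) hks) 2
  calc 4 / (81 * π ^ 2) * s ^ 2 * n ^ 3 = 4 / π ^ 2 * s ^ 2 * ((n / 3) ^ 3 / 3) := by ring
    _ ≤ 4 / π ^ 2 * s ^ 2 * ((m : ℝ) ^ 3 / 3) := by gcongr
    _ ≤ 4 / π ^ 2 * s ^ 2 * ∑ k ∈ Icc 1 m, (k : ℝ) ^ 2 := by
      gcongr; exact cube_div_three_le_sum_sq m
    _ = ∑ k ∈ Icc 1 m, (2 / π * (k * s)) ^ 2 := by
      rw [mul_sum]; refine sum_congr rfl fun k _ ↦ ?_; ring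
    _ ≤ ∑ k ∈ Icc 1 m, sin (k * s) ^ 2 := sum_le_sum jordan
    _ ≤ ∑ k ∈ Icc 1 n, sin (k * s) ^ 2 :=
      sum_le_sum_of_subset_of_nonneg (Icc_subset_Icc_right (by omega)) fun _ _ _ ↦ by positivity

lemma sum_sin_sq_ge_of_pi_div_le {n : ℕ} {s : ℝ} (hn : 1 ≤ n) (hs₁ : π / n ≤ s)
    (hs₂ : s ≤ π / 2) : (n : ℝ) / 4 ≤ ∑ k ∈ Icc 1 n, sin (k * s) ^ 2 := by
  have hn₀ : (0 : ℝ) < n := by exact_mod_cast hn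
  have hs₀ : 0 < s := lt_of_lt_of_le (by positivity) hs₁
  have hsin_ge : 2 / n ≤ sin s :=
    calc 2 / (n : ℝ) = 2 / π * (π / n) := by field_simp
      _ ≤ 2 / π * s := by gcongr
      _ ≤ sin s := mul_le_sin hs₀.le hs₂
  have hsin : 0 < sin s := lt_of_lt_of_le (by positivity) hsin_ge
  have hinv : 1 / sin s ≤ n / 2 := by
    rw [div_le_iff₀ hsin]
    calc (1 : ℝ) = n / 2 * (2 / n) := by field_simp
      _ ≤ n / 2 * sin s := by gcongr
  rw [sum_sin_sq_eq]
  linarith [(abs_le.mp (abs_sum_cos_two_mul_le n hsin)).2]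

lemma abs_prod_cos_le_exp_add_exp {n : ℕ} {t : ℝ} (hn : 3 ≤ n) (ht : |t| ≤ π / 2) :
    |∏ k ∈ Icc 1 n, cos (k * t)| ≤
      exp (-(2 / (81 * π ^ 2)) * (t ^ 2 * n ^ 3)) + exp (-(1 / 8) * n) := by
  have heven : ∏ k ∈ Icc 1 n, cos (k * t) = ∏ k ∈ Icc 1 n, cos (k * |t|) := by
    refine prod_congr rfl fun k _ ↦ ?_
    rw [← cos_abs (k * t), abs_mul, Nat.abs_cast]
  rw [heven]
  refine (abs_prod_cos_le_exp_neg_sum_sin_sq n |t|).trans ?_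
  rcases le_or_gt |t| (π / n) with hsmall | hlarge
  · have := sum_sin_sq_ge_of_le_pi_div hn (abs_nonneg t) hsmall
    rw [sq_abs] at this
    refine le_add_of_le_of_nonneg (exp_le_exp.mpr ?_) (exp_pos _).le
    linarith [show 4 / (81 * π ^ 2) * t ^ 2 * n ^ 3 = 2 * (2 / (81 * π ^ 2) * (t ^ 2 * n ^ 3)) by
      ring]
  · have := sum_sin_sq_ge_of_pi_div_le (by omega) hlarge.le ht
    refine le_add_of_nonneg_of_le (exp_pos _).le (exp_le_exp.mpr ?_)
    linarith

lemma rpow_two_mul_le_sq_mul_cube {x ε t : ℝ} (hx : 0 < x) (ht : x ^ (-(3 / 2 - ε)) ≤ |t|) :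
    x ^ (2 * ε) ≤ t ^ 2 * x ^ 3 := by
  have hsq : (x ^ (-(3 / 2 - ε))) ^ 2 ≤ t ^ 2 := by
    rw [← sq_abs t]; exact pow_le_pow_left₀ (by positivity) ht 2
  calc x ^ (2 * ε) = (x ^ (-(3 / 2 - ε))) ^ 2 * x ^ 3 := by
        rw [← rpow_natCast, ← rpow_mul hx.le, ← rpow_natCast x 3, ← rpow_add hx]
        norm_num
        ring_nf
    _ ≤ t ^ 2 * x ^ 3 := by gcongr

lemma setIntegral_le_of_subset_Icc {f : ℝ → ℝ} {s : Set ℝ} {a b C : ℝ} (hab : a ≤ b)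
    (hs : s ⊆ Set.Icc a b) (hC : 0 ≤ C) (hf : ∀ t ∈ s, |f t| ≤ C) :
    ∫ t in s, f t ≤ C * (b - a) :=
  calc ∫ t in s, f t ≤ ‖∫ t in s, f t‖ := le_abs_self _
    _ ≤ C * volume.real s :=
      norm_setIntegral_le_of_norm_le_const ((measure_mono hs).trans_lt measure_Icc_lt_top) hf
    _ ≤ C * volume.real (Set.Icc a b) := by gcongr; exact measure_Icc_lt_top.ne
    _ = C * (b - a) := by rw [Real.volume_real_Icc_of_le hab]

lemma tendsto_rpow_mul_exp_neg_mul_rpow_atTop (p : ℝ) {c a : ℝ} (hc : 0 < c) (ha : 0 < a) :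
    Tendsto (fun x : ℝ ↦ x ^ p * exp (-c * x ^ a)) atTop (nhds 0) := by
  refine ((tendsto_rpow_mul_exp_neg_mul_atTop_nhds_zero (p / a) c hc).comp
    (tendsto_rpow_atTop ha)).congr' ?_
  filter_upwards [eventually_ge_atTop 0] with x hx
  simp only [Function.comp_apply, ← rpow_mul hx, mul_div_cancel₀ p ha.ne']

theorem stmt_10_general (ε : ℝ) (hε0 : 0 < ε) :
    Tendsto (fun n : ℕ =>
        (n : ℝ) ^ ((3 : ℝ) / 2) *
          ∫ t in {t : ℝ | (n : ℝ) ^ (-(3 / 2 - ε)) ≤ |t| ∧ |t| ≤ π / 2},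
            |∏ k ∈ Finset.Icc 1 n, Real.cos (k * t)|)
      atTop (nhds 0) := by
  set c : ℝ := 2 / (81 * π ^ 2)
  have hc : 0 < c := by positivity
  have hbound : Tendsto (fun n : ℕ ↦ (n : ℝ) ^ ((3 : ℝ) / 2) *
      ((exp (-c * (n : ℝ) ^ (2 * ε)) + exp (-(1 / 8) * (n : ℝ) ^ (1 : ℝ))) * (π / 2 - -(π / 2))))
      atTop (nhds 0) := by
    have h₁ := tendsto_rpow_mul_exp_neg_mul_rpow_atTop (3 / 2) hc (by positivity : 0 < 2 * ε)
    have h₂ :=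
      tendsto_rpow_mul_exp_neg_mul_rpow_atTop (3 / 2) (by norm_num : (0 : ℝ) < 1 / 8) one_pos
    have h := (h₁.add h₂).mul_const (π / 2 - -(π / 2))
    simpa only [Function.comp_def, zero_add, zero_mul, add_mul, mul_add, mul_assoc] using
      h.comp tendsto_natCast_atTop_atTop
  refine tendsto_of_tendsto_of_tendsto_of_le_of_le' tendsto_const_nhds hbound
    (Eventually.of_forall fun n ↦ by positivity) ?_
  filter_upwards [eventually_ge_atTop 3] with n hn
  have hn₀ : (0 : ℝ) < n := by positivity
  gcongr
  refine setIntegral_le_of_subset_Icc (by linarith [pi_pos]) (fun t ht ↦ abs_le.mp ht.2)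
    (by positivity) fun t ht ↦ ?_
  rw [abs_abs, rpow_one]
  refine (abs_prod_cos_le_exp_add_exp hn ht.2).trans (add_le_add_left (exp_le_exp.mpr ?_) _)
  have := rpow_two_mul_le_sq_mul_cube hn₀ ht.1
  rw [neg_mul, neg_mul, neg_le_neg_iff]
  gcongr

theorem stmt_10 (ε : ℝ) (hε0 : 0 < ε) (hε1 : ε < 1 / 4) :
    Tendsto (fun n : ℕ =>
        (n : ℝ) ^ ((3 : ℝ) / 2) *
          ∫ t in {t : ℝ | (n : ℝ) ^ (-(3 / 2 - ε)) ≤ |t| ∧ |t| ≤ π / 2},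
            |∏ k ∈ Finset.Icc 1 n, Real.cos (k * t)|)
      atTop (nhds 0) :=
  stmt_10_general ε hε0
end

section
/- Fix 0 < ε < 1/6. Then uniformly for |t| ≤ n^{-(3/2-ε)}, ∏_{k=1}^n cos(kt) = e^{-t² n(n+1)(2n+1)/12} · (1 + o(1)) as n → ∞; more precisely, |log ∏_{k=1}^n cos(kt) + t² n(n+1)(2n+1)/12| ≤ a·n^{-(9/2-3ε)}·n²(n+1)²/4 for some absolute constant a and all sufficiently large n. -/
/-! Since `n |t| ≤ n^(ε - 1/2) ≤ 1/2`, every angle `k t` is small, and there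
`log (cos x) = -x²/2 + O(x⁴)` (compare `cos x` with `1 - x²/2` and `log (1 - u)` with `-u`).
Summing over `k` turns the quadratic terms into `t² ∑ k² / 2`, and the errors are at most
`|t|³ ∑ k³ ≤ n^(-(9/2 - 3ε)) ∑ k³`. -/

open Real Finset

lemma abs_log_cos_add_sq_div_two_le {x : ℝ} (hx : |x| ≤ 1 / 2) :
    |log (cos x) + x ^ 2 / 2| ≤ x ^ 4 / 2 := by
  set u := 1 - cos x with hu
  have hx2 : x ^ 2 ≤ 1 / 4 := by nlinarith [sq_abs x, abs_nonneg x]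
  have hx4 : 0 ≤ x ^ 4 := by positivity
  have hu0 : 0 ≤ u := by linarith [cos_le_one x]
  have hu1 : u ≤ x ^ 2 / 2 := by linarith [one_sub_sq_div_two_le_cos (x := x)]
  have hlog : |u + log (1 - u)| ≤ u ^ 2 / (1 - u) := by
    simpa [abs_of_nonneg hu0] using
      abs_log_sub_add_sum_range_le (x := u) (by rw [abs_of_nonneg hu0]; linarith) 1
  have hcos : |x ^ 2 / 2 - u| ≤ x ^ 4 * (5 / 96) := by
    have := cos_bound (hx.trans (by norm_num))
    rwa [Even.pow_abs (by decide), ← show x ^ 2 / 2 - u = cos x - (1 - x ^ 2 / 2) by ring] at this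
  have hquad : u ^ 2 / (1 - u) ≤ x ^ 4 * (2 / 7) := by
    rw [div_le_iff₀ (by linarith)]
    nlinarith [mul_le_mul hu1 hu1 hu0 (by positivity)]
  calc |log (cos x) + x ^ 2 / 2| = |(u + log (1 - u)) + (x ^ 2 / 2 - u)| := by
        rw [hu, sub_sub_cancel]; ring_nf
    _ ≤ |u + log (1 - u)| + |x ^ 2 / 2 - u| := abs_add_le _ _
    _ ≤ x ^ 4 / 2 := by linarith

lemma sum_Icc_sq (n : ℕ) : ∑ k ∈ Icc 1 n, (k : ℝ) ^ 2 = n * (n + 1) * (2 * n + 1) / 6 := by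
  induction n with
  | zero => simp
  | succ m ih =>
    rw [sum_Icc_succ_top (by omega), ih]
    push_cast; ring

lemma sum_Icc_cube (n : ℕ) : ∑ k ∈ Icc 1 n, (k : ℝ) ^ 3 = n ^ 2 * (n + 1) ^ 2 / 4 := by
  induction n with
  | zero => simp
  | succ m ih =>
    rw [sum_Icc_succ_top (by omega), ih]
    push_cast; ring

lemma abs_log_prod_cos_add_le {n : ℕ} {t : ℝ} (h : n * |t| ≤ 1 / 2) :
    |log (∏ k ∈ Icc 1 n, cos (k * t)) + t ^ 2 * n * (n + 1) * (2 * n + 1) / 12|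
      ≤ |t| ^ 3 * (n ^ 2 * (n + 1) ^ 2 / 4) := by
  have hsmall : ∀ k ∈ Icc 1 n, |(k : ℝ) * t| ≤ 1 / 2 := fun k hk => by
    rw [abs_mul, Nat.abs_cast]
    exact le_trans (by gcongr; exact_mod_cast (mem_Icc.mp hk).2) h
  have hterm : ∀ k ∈ Icc 1 n, |log (cos (k * t)) + (k * t) ^ 2 / 2| ≤ |t| ^ 3 * (k : ℝ) ^ 3 :=
    fun k hk => by
      have hx := hsmall k hk
      calc _ ≤ ((k : ℝ) * t) ^ 4 / 2 := abs_log_cos_add_sq_div_two_le hx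
        _ = |(k : ℝ) * t| ^ 3 * |(k : ℝ) * t| / 2 := by rw [← pow_succ, Even.pow_abs (by decide)]
        _ ≤ |(k : ℝ) * t| ^ 3 := by nlinarith [pow_nonneg (abs_nonneg ((k : ℝ) * t)) 3]
        _ = |t| ^ 3 * (k : ℝ) ^ 3 := by rw [abs_mul, Nat.abs_cast]; ring
  have hquad : t ^ 2 * n * (n + 1) * (2 * n + 1) / 12 = ∑ k ∈ Icc 1 n, ((k : ℝ) * t) ^ 2 / 2 := by
    simp_rw [mul_pow, mul_div_assoc, ← sum_mul, sum_Icc_sq]; ring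
  rw [log_prod fun k hk => (cos_pos_of_le_one ((hsmall k hk).trans (by norm_num))).ne',
    hquad, ← sum_add_distrib, ← sum_Icc_cube, mul_sum]
  exact (abs_sum_le_sum_abs _ _).trans (sum_le_sum hterm)

lemma natCast_mul_abs_le_half {ε : ℝ} (hε : ε < 1 / 6) {n : ℕ} (hn : 8 ≤ n) {t : ℝ}
    (ht : |t| ≤ (n : ℝ) ^ (-(3 / 2 - ε))) : n * |t| ≤ 1 / 2 := by
  have hn8 : (8 : ℝ) ≤ n := by exact_mod_cast hn
  have hn0 : (0 : ℝ) < n := by linarith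
  calc n * |t| ≤ (n : ℝ) * (n : ℝ) ^ (-(3 / 2 - ε)) := by gcongr
    _ = (n : ℝ) ^ (ε - 1 / 2) := by
        rw [← rpow_one_add' hn0.le (by linarith)]; ring_nf
    _ ≤ (n : ℝ) ^ (-(1 / 3) : ℝ) := rpow_le_rpow_of_exponent_le (by linarith) (by linarith)
    _ ≤ (8 : ℝ) ^ (-(1 / 3) : ℝ) := rpow_le_rpow_of_nonpos (by norm_num) hn8 (by norm_num)
    _ = 1 / 2 := by
        rw [show (8 : ℝ) = 2 ^ (3 : ℝ) by norm_num, ← rpow_mul (by norm_num)]; norm_num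

theorem stmt_15_general (ε : ℝ) (hε1 : ε < 1 / 6) :
    ∃ a : ℝ, 0 < a ∧ ∃ N : ℕ, ∀ n : ℕ, N ≤ n → ∀ t : ℝ, |t| ≤ (n : ℝ) ^ (-(3 / 2 - ε)) →
      |Real.log (∏ k ∈ Finset.Icc 1 n, Real.cos (k * t))
          + t ^ 2 * n * (n + 1) * (2 * n + 1) / 12|
        ≤ a * (n : ℝ) ^ (-(9 / 2 - 3 * ε)) * n ^ 2 * (n + 1) ^ 2 / 4 := by
  refine ⟨1, one_pos, 8, fun n hn t ht => ?_⟩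
  have hn0 : (0 : ℝ) ≤ n := n.cast_nonneg
  have ht3 : |t| ^ 3 ≤ (n : ℝ) ^ (-(9 / 2 - 3 * ε)) := by
    calc |t| ^ 3 ≤ ((n : ℝ) ^ (-(3 / 2 - ε))) ^ 3 := by gcongr
      _ = (n : ℝ) ^ (-(9 / 2 - 3 * ε)) := by
          rw [← rpow_mul_natCast hn0]; ring_nf
  calc _ ≤ |t| ^ 3 * (n ^ 2 * (n + 1) ^ 2 / 4) :=
        abs_log_prod_cos_add_le (natCast_mul_abs_le_half hε1 hn ht)
    _ ≤ (n : ℝ) ^ (-(9 / 2 - 3 * ε)) * (n ^ 2 * (n + 1) ^ 2 / 4) := by gcongr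
    _ = _ := by ring

theorem stmt_15 (ε : ℝ) (hε0 : 0 < ε) (hε1 : ε < 1 / 6) :
    ∃ a : ℝ, 0 < a ∧ ∃ N : ℕ, ∀ n : ℕ, N ≤ n → ∀ t : ℝ, |t| ≤ (n : ℝ) ^ (-(3 / 2 - ε)) →
      |Real.log (∏ k ∈ Finset.Icc 1 n, Real.cos (k * t))
          + t ^ 2 * n * (n + 1) * (2 * n + 1) / 12|
        ≤ a * (n : ℝ) ^ (-(9 / 2 - 3 * ε)) * n ^ 2 * (n + 1) ^ 2 / 4 :=
  stmt_15_general ε hε1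
end
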